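/- For all t ∈ [0,1], 0 ≤ arcsin(t) - t ≤ (π/2 - 1) t³. -/

import Mathlib

/-!
The lower bound is `sin θ ≤ θ` at `θ = arcsin t`. For the upper bound, `F t = (arcsin t - t) / t³`
is increasing on `(0, 1]`, so `F t ≤ F 1 = π / 2 - 1`. The numerator of `F'` has the sign of
`t / √(1 - t²) - t - 3 (arcsin t - t)`, which vanishes at `0` and has derivative
`(1 - s)² (1 + 2 s) / s³ ≥ 0`, where `s = √(1 - t²)`.
-/

open Real

open Set

namespace Real

lemma hasDerivAt_div_sqrt_one_sub_sq {x : ℝ} (hx : x ∈ Ioo (-1 : ℝ) 1) :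
    HasDerivAt (fun y => y / √(1 - y ^ 2)) (1 / √(1 - x ^ 2) ^ 3) x := by
  have hpos : 0 < 1 - x ^ 2 := by nlinarith [hx.1, hx.2]
  have hs : 0 < √(1 - x ^ 2) := sqrt_pos.2 hpos
  have hsqrt : HasDerivAt (fun y => √(1 - y ^ 2)) (-(2 * x) / (2 * √(1 - x ^ 2))) x := by
    simpa using ((hasDerivAt_pow 2 x).const_sub 1).sqrt hpos.ne'
  refine ((hasDerivAt_id' x).div hsqrt hs.ne').congr_deriv ?_
  field_simp
  rw [sq_sqrt hpos.le]
  ring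

lemma three_mul_arcsin_sub_self_le {x : ℝ} (h0 : 0 ≤ x) (h1 : x < 1) :
    3 * (arcsin x - x) ≤ x / √(1 - x ^ 2) - x := by
  set V : ℝ → ℝ := fun y => y / √(1 - y ^ 2) + 2 * y - 3 * arcsin y
  set V' : ℝ → ℝ := fun y => 1 / √(1 - y ^ 2) ^ 3 + 2 - 3 * (1 / √(1 - y ^ 2))
  have hV : ∀ y ∈ Ioo (-1 : ℝ) 1, HasDerivAt V (V' y) y := fun y hy =>
    (((hasDerivAt_div_sqrt_one_sub_sq hy).add ((hasDerivAt_id y).const_mul 2)).sub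
      ((hasDerivAt_arcsin hy.1.ne' hy.2.ne).const_mul 3)).congr_deriv (by simp [V'])
  have hV_mono : MonotoneOn V (Ico 0 1) := by
    have hIoo : ∀ y ∈ Ico (0 : ℝ) 1, y ∈ Ioo (-1 : ℝ) 1 := fun y hy => ⟨by linarith [hy.1], hy.2⟩
    refine monotoneOn_of_hasDerivWithinAt_nonneg (f' := V') (convex_Ico 0 1)
      (fun y hy => (hV y (hIoo y hy)).continuousAt.continuousWithinAt)
      (fun y hy => (hV y (hIoo y (interior_subset hy))).hasDerivWithinAt) fun y hy => ?_
    rw [interior_Ico] at hy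
    have hs : 0 < √(1 - y ^ 2) := sqrt_pos.2 (by nlinarith [hy.1, hy.2])
    have hV'_eq : V' y = (1 - √(1 - y ^ 2)) ^ 2 * (1 + 2 * √(1 - y ^ 2)) / √(1 - y ^ 2) ^ 3 := by
      simp only [V']; field_simp; ring
    rw [hV'_eq]
    positivity
  have hV_nonneg : V 0 ≤ V x := hV_mono ⟨le_rfl, one_pos⟩ ⟨h0, h1⟩ h0
  norm_num [V] at hV_nonneg
  linarith

lemma self_le_arcsin {x : ℝ} (h0 : 0 ≤ x) (h1 : x ≤ 1) : x ≤ arcsin x := by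
  simpa only [sin_arcsin (by linarith) h1] using sin_le (arcsin_nonneg.2 h0)

lemma monotoneOn_arcsin_sub_self_div_pow_three :
    MonotoneOn (fun t => (arcsin t - t) / t ^ 3) (Ioc 0 1) := by
  have hderiv : ∀ x ∈ Ioo (0 : ℝ) 1, HasDerivAt (fun t => (arcsin t - t) / t ^ 3)
      ((x / √(1 - x ^ 2) - x - 3 * (arcsin x - x)) / x ^ 4) x := by
    intro x hx
    have hx0 : x ≠ 0 := hx.1.ne'
    have hs : 0 < √(1 - x ^ 2) := sqrt_pos.2 (by nlinarith [hx.1, hx.2])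
    refine (((hasDerivAt_arcsin (by linarith [hx.1]) hx.2.ne).sub (hasDerivAt_id' x)).div
      (hasDerivAt_pow 3 x) (pow_ne_zero 3 hx.1.ne')).congr_deriv ?_
    simp only [Pi.sub_apply]
    field_simp
    ring
  have hcont : ContinuousOn (fun t => (arcsin t - t) / t ^ 3) (Ioc 0 1) := fun x hx =>
    ((continuous_arcsin.sub continuous_id).continuousAt.div (continuous_pow 3).continuousAt
      (pow_ne_zero 3 hx.1.ne')).continuousWithinAt
  refine monotoneOn_of_hasDerivWithinAt_nonneg (convex_Ioc 0 1) hcont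
    (fun x hx => (hderiv x (by rwa [interior_Ioc] at hx)).hasDerivWithinAt) fun x hx => ?_
  rw [interior_Ioc] at hx
  exact div_nonneg (by linarith [three_mul_arcsin_sub_self_le hx.1.le hx.2]) (by positivity)

end Real

theorem arcsin_sub_self_bound (t : ℝ) (ht : t ∈ Set.Icc (0:ℝ) 1) :
    0 ≤ Real.arcsin t - t ∧ Real.arcsin t - t ≤ (π / 2 - 1) * t ^ 3 := by
  obtain ⟨h0, h1⟩ := ht
  refine ⟨sub_nonneg.2 (self_le_arcsin h0 h1), ?_⟩
  rcases h0.eq_or_lt with rfl | hpos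
  · simp
  have hratio := monotoneOn_arcsin_sub_self_div_pow_three ⟨hpos, h1⟩ ⟨one_pos, le_rfl⟩ h1
  simp only [arcsin_one, one_pow, div_one] at hratio
  calc arcsin t - t = (arcsin t - t) / t ^ 3 * t ^ 3 := by field_simp
    _ ≤ (π / 2 - 1) * t ^ 3 := by gcongr
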